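/- Let K be a field with a surjective discrete additive valuation ν: K^× → ℤ, valuation ring O = {x ∈ K^× : ν(x) ≥ 0} ∪ {0}, maximal ideal P = {x ∈ K^× : ν(x) > 0} ∪ {0}, and uniformizer π (ν(π) = 1). Let f = Σ_{α} c_α X^α be a nonzero Laurent polynomial in n variables all of whose nonzero coefficients c_α are units of O, let ω ∈ ℤ^n, let m := min{⟨α,ω⟩ : α ∈ supp(f)}, and let init_ω(f) := Σ_{α ∈ supp(f), ⟨α,ω⟩ = m} c_α X^α be the initial form of f with respect to ω. Suppose u ∈ (O^×)^n satisfies init_ω(f)(u) ∉ P. Then for x := (π^{ω₁}u₁, …, π^{ω_n}u_n) ∈ (K^×)^n one has f(x) ≠ 0 and ν(f(x)) = m. -/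

import Mathlib

section Aux

variable {K : Type*} [Field K] (ν : K → ℤ)
    (hmul : ∀ x y : K, x ≠ 0 → y ≠ 0 → ν (x * y) = ν x + ν y)
    (hadd : ∀ x y : K, x ≠ 0 → y ≠ 0 → x + y ≠ 0 → min (ν x) (ν y) ≤ ν (x + y))

include hmul

theorem aux_one : ν 1 = 0 := by
  have := hmul 1 1 one_ne_zero one_ne_zero
  rw [mul_one] at this; omega

theorem aux_inv {x : K} (hx : x ≠ 0) : ν x⁻¹ = -ν x := by
  have := hmul x x⁻¹ hx (inv_ne_zero hx)
  rw [mul_inv_cancel₀ hx, aux_one ν hmul] at this; omega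

theorem aux_zpow {x : K} (hx : x ≠ 0) (k : ℤ) : ν (x ^ k) = k * ν x := by
  induction k using Int.induction_on with
  | zero => simpa using aux_one ν hmul
  | succ k ih =>
      rw [zpow_add₀ hx, hmul _ _ (zpow_ne_zero _ hx) (by simpa using hx), ih]
      simp; ring
  | pred k ih =>
      rw [sub_eq_add_neg, zpow_add₀ hx, hmul _ _ (zpow_ne_zero _ hx) (zpow_ne_zero _ hx), ih,
        zpow_neg, zpow_one, aux_inv ν hmul hx]
      ring

theorem aux_prod {ι : Type*} (s : Finset ι) (g : ι → K) (hg : ∀ i ∈ s, g i ≠ 0) :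
    ν (∏ i ∈ s, g i) = ∑ i ∈ s, ν (g i) := by
  induction s using Finset.cons_induction with
  | empty => simpa using aux_one ν hmul
  | cons a s ha ih =>
      rw [Finset.prod_cons, Finset.sum_cons,
        hmul _ _ (hg a (Finset.mem_cons_self a s))
          (Finset.prod_ne_zero_iff.2 fun i hi => hg i (Finset.mem_cons_of_mem hi)),
        ih fun i hi => hg i (Finset.mem_cons_of_mem hi)]

include hadd

omit hmul in theorem aux_sum {ι : Type*} (s : Finset ι) (g : ι → K) (c : ℤ)
    (hg : ∀ i ∈ s, g i ≠ 0) (hc : ∀ i ∈ s, c ≤ ν (g i)) :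
    (∑ i ∈ s, g i) = 0 ∨ ((∑ i ∈ s, g i) ≠ 0 ∧ c ≤ ν (∑ i ∈ s, g i)) := by
  induction s using Finset.cons_induction with
  | empty => left; simp
  | cons a s ha ih =>
      rw [Finset.sum_cons]
      rcases ih (fun i hi => hg i (Finset.mem_cons_of_mem hi))
        (fun i hi => hc i (Finset.mem_cons_of_mem hi)) with h0 | ⟨hs0, hle⟩
      · rw [h0, add_zero]
        right
        exact ⟨hg a (Finset.mem_cons_self a s), hc a (Finset.mem_cons_self a s)⟩
      · by_cases hz : g a + ∑ i ∈ s, g i = 0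
        · left; exact hz
        · right
          refine ⟨hz, ?_⟩
          have h1 := hadd _ _ (hg a (Finset.mem_cons_self a s)) hs0 hz
          have h2 := hc a (Finset.mem_cons_self a s)
          simp only [min_le_iff] at h1
          omega

omit hadd in theorem aux_neg {x : K} (hx : x ≠ 0) : ν (-x) = ν x := by
  have h1 : ν (-1 : K) = 0 := by
    have := hmul (-1) (-1) (by norm_num) (by norm_num)
    rw [neg_mul_neg, one_mul, aux_one ν hmul] at this; omega
  rw [← neg_one_mul, hmul _ _ (by norm_num) hx, h1, zero_add]

include hadd

theorem aux_add_lt {x y : K} (hx : x ≠ 0) (hy : y ≠ 0) (hlt : ν x < ν y) :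
    x + y ≠ 0 ∧ ν (x + y) = ν x := by
  have hxy : x + y ≠ 0 := by
    intro h
    have hx' : x = -y := eq_neg_of_add_eq_zero_left h
    rw [hx', aux_neg ν hmul hy] at hlt; omega
  refine ⟨hxy, ?_⟩
  have h1 := hadd x y hx hy hxy
  have h2 := hadd (x + y) (-y) hxy (neg_ne_zero.2 hy) (by simpa using hx)
  rw [add_neg_cancel_right, aux_neg ν hmul hy] at h2
  simp only [min_le_iff] at h1 h2
  omega

end Aux

/-- Let `ν : K^× → ℤ` be a surjective discrete valuation with uniformizer `π`,
let `f` be a nonzero Laurent polynomial all of whose nonzero coefficients are units of the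
valuation ring, let `ω ∈ ℤ^n`, let `m = min{⟨α,ω⟩ : α ∈ supp(f)}` and let `init_ω(f)` be
the corresponding initial form. If `u ∈ (O^×)^n` satisfies `init_ω(f)(u) ∉ P`, then for
`x = (π^{ω₁}u₁, …, π^{ω_n}u_n)` one has `f(x) ≠ 0` and `ν(f(x)) = m`. -/
theorem statement14 (K : Type*) [Field K] (ν : K → ℤ)
    (hmul : ∀ x y : K, x ≠ 0 → y ≠ 0 → ν (x * y) = ν x + ν y)
    (hadd : ∀ x y : K, x ≠ 0 → y ≠ 0 → x + y ≠ 0 → min (ν x) (ν y) ≤ ν (x + y))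
    (hsurj : ∀ z : ℤ, ∃ x : K, x ≠ 0 ∧ ν x = z)
    (π : K) (hπ0 : π ≠ 0) (hπ : ν π = 1)
    (n : ℕ) (f : (Fin n → ℤ) →₀ K) (hf : f ≠ 0)
    (hunit : ∀ α ∈ f.support, ν (f α) = 0)
    (ω : Fin n → ℤ) (m : ℤ)
    (hm : IsLeast ((fun α : Fin n → ℤ => ∑ i, α i * ω i) '' (f.support : Set (Fin n → ℤ))) m)
    (u : Fin n → K) (hu : ∀ i, u i ≠ 0) (huν : ∀ i, ν (u i) = 0)
    (hinit :
      (∑ α ∈ f.support.filter (fun α => ∑ i, α i * ω i = m), f α * ∏ i, u i ^ (α i)) ≠ 0 ∧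
      ν (∑ α ∈ f.support.filter (fun α => ∑ i, α i * ω i = m), f α * ∏ i, u i ^ (α i)) ≤ 0) :
    (∑ α ∈ f.support, f α * ∏ i, (π ^ (ω i) * u i) ^ (α i)) ≠ 0 ∧
      ν (∑ α ∈ f.support, f α * ∏ i, (π ^ (ω i) * u i) ^ (α i)) = m := by
  classical
  set A := ∑ α ∈ f.support.filter (fun α => ∑ i, α i * ω i = m), f α * ∏ i, u i ^ (α i) with hA
  -- basic facts about the unit parts
  have hprodu_ne : ∀ α : Fin n → ℤ, (∏ i, u i ^ (α i)) ≠ 0 := fun α =>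
    Finset.prod_ne_zero_iff.2 fun i _ => zpow_ne_zero _ (hu i)
  have hterm_ne : ∀ α ∈ f.support, f α * ∏ i, u i ^ (α i) ≠ 0 := fun α hα =>
    mul_ne_zero (Finsupp.mem_support_iff.1 hα) (hprodu_ne α)
  have hterm_ν : ∀ α ∈ f.support, ν (f α * ∏ i, u i ^ (α i)) = 0 := by
    intro α hα
    rw [hmul _ _ (Finsupp.mem_support_iff.1 hα) (hprodu_ne α), hunit α hα,
      aux_prod ν hmul _ _ (fun i _ => zpow_ne_zero _ (hu i))]
    simp [aux_zpow ν hmul (hu _), huν]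
  -- valuation of the initial form is 0
  have hνA : ν A = 0 := by
    have key := aux_sum ν hadd (f.support.filter (fun α => ∑ i, α i * ω i = m))
        (fun α => f α * ∏ i, u i ^ (α i)) 0
        (fun α hα => hterm_ne α (Finset.mem_of_mem_filter α hα))
        (fun α hα => le_of_eq (hterm_ν α (Finset.mem_of_mem_filter α hα)).symm)
    rcases key with h0 | ⟨_, hle⟩
    · exact absurd h0 hinit.1
    · exact le_antisymm hinit.2 hle
  -- rewrite each monomial value
  have hππ : ∀ (s : Finset (Fin n)) (c : Fin n → ℤ),
      ∏ i ∈ s, π ^ (c i) = π ^ (∑ i ∈ s, c i) := by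
    intro s c
    induction s using Finset.cons_induction with
    | empty => simp
    | cons a s ha ih => rw [Finset.prod_cons, Finset.sum_cons, ih, zpow_add₀ hπ0]
  have hterm : ∀ α : Fin n → ℤ,
      f α * ∏ i, (π ^ (ω i) * u i) ^ (α i)
        = π ^ (∑ i, α i * ω i) * (f α * ∏ i, u i ^ (α i)) := by
    intro α
    simp only [mul_zpow, Finset.prod_mul_distrib, ← zpow_mul]
    rw [hππ Finset.univ (fun i => ω i * α i)]
    have : ∑ i, ω i * α i = ∑ i, α i * ω i := by
      exact Finset.sum_congr rfl fun i _ => mul_comm _ _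
    rw [this]; ring
  -- split the sum
  have hsplit :
      (∑ α ∈ f.support, f α * ∏ i, (π ^ (ω i) * u i) ^ (α i))
        = π ^ m * A +
          ∑ α ∈ f.support.filter (fun α => ¬ (∑ i, α i * ω i = m)),
            f α * ∏ i, (π ^ (ω i) * u i) ^ (α i) := by
    rw [← Finset.sum_filter_add_sum_filter_not f.support (fun α => ∑ i, α i * ω i = m),
      hA, Finset.mul_sum]
    congr 1
    refine Finset.sum_congr rfl fun α hα => ?_
    rw [hterm α, (Finset.mem_filter.1 hα).2]
  set B := ∑ α ∈ f.support.filter (fun α => ¬ (∑ i, α i * ω i = m)),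
      f α * ∏ i, (π ^ (ω i) * u i) ^ (α i) with hB
  have hx_ne : π ^ m * A ≠ 0 := mul_ne_zero (zpow_ne_zero _ hπ0) hinit.1
  have hx_ν : ν (π ^ m * A) = m := by
    rw [hmul _ _ (zpow_ne_zero _ hπ0) hinit.1, aux_zpow ν hmul hπ0, hπ, hνA]; ring
  -- each remaining term has valuation ≥ m + 1
  have hBbound := aux_sum ν hadd
      (f.support.filter (fun α => ¬ (∑ i, α i * ω i = m)))
      (fun α => f α * ∏ i, (π ^ (ω i) * u i) ^ (α i)) (m + 1)
      (fun α hα => by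
        show f α * ∏ i, (π ^ (ω i) * u i) ^ (α i) ≠ 0
        rw [hterm α]
        exact mul_ne_zero (zpow_ne_zero _ hπ0)
          (hterm_ne α (Finset.mem_of_mem_filter α hα)))
      (fun α hα => by
        obtain ⟨hαS, hαne⟩ := Finset.mem_filter.1 hα
        have hge : m ≤ ∑ i, α i * ω i := hm.2 (Set.mem_image_of_mem _ (by simpa using hαS))
        show m + 1 ≤ ν (f α * ∏ i, (π ^ (ω i) * u i) ^ (α i))
        rw [hterm α, hmul _ _ (zpow_ne_zero _ hπ0) (hterm_ne α hαS),
          aux_zpow ν hmul hπ0, hπ, hterm_ν α hαS]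
        omega)
  rw [hsplit]
  rcases hBbound with h0 | ⟨hBne, hBle⟩
  · rw [hB, h0, add_zero]
    exact ⟨hx_ne, hx_ν⟩
  · rw [← hB] at hBne hBle
    have := aux_add_lt ν hmul hadd hx_ne hBne (by omega)
    rw [hx_ν] at this
    exact ⟨this.1, this.2⟩
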